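/- Let ν>0, τ≥0 and let S, D be symmetric 3×3 real matrices. The following are equivalent: (i) 2νD = ((|S| - τ)⁺/|S|) S (with the convention that the right side is 0 when S=0); (ii) setting Z := S - 2νD, one has |Z| ≤ τ and Z:D ≥ τ|D|. -/

import Mathlib

noncomputable def fdot (A B : Matrix (Fin 3) (Fin 3) ℝ) : ℝ := ∑ i, ∑ j, A i j * B i j

noncomputable def fnorm (A : Matrix (Fin 3) (Fin 3) ℝ) : ℝ := Real.sqrt (fdot A A)

/-!
With `c = 2ν`, `y = cD` and `Z = S - y`, statement (i) says that `y` is the soft-thresholding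
(shrinkage) of `S` at level `τ`, and the equivalence holds in any real inner product space; the
Frobenius product makes the matrices one. If `y` is the shrinkage of `x`, then `x - y` is either
`x` itself (when `‖x‖ ≤ τ`, `y = 0`) or the radial rescaling of `x` to norm `τ`, which gives (ii).
Conversely, (ii) and Cauchy–Schwarz force `⟪x - y, y⟫ = ‖x - y‖ ‖y‖ = τ ‖y‖`, so for `y ≠ 0`
the vector `x - y` has norm `τ` and points along `y`; hence `x = (1 + τ / ‖y‖) • y`, whose
shrinkage is `y`.
-/

open scoped InnerProductSpace

section SoftThreshold

variable {E : Type*} [NormedAddCommGroup E] [InnerProductSpace ℝ E] {τ : ℝ} {x y : E}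

/-- At `x = 0` the junk value of `_ / 0` is harmless, since it multiplies `0`. -/
noncomputable def softThreshold (τ : ℝ) (x : E) : E := (max (‖x‖ - τ) 0 / ‖x‖) • x

lemma softThreshold_of_norm_le (h : ‖x‖ ≤ τ) : softThreshold τ x = 0 := by
  simp [softThreshold, max_eq_right (sub_nonpos.2 h)]

lemma softThreshold_of_lt_norm (h : τ < ‖x‖) :
    softThreshold τ x = ((‖x‖ - τ) / ‖x‖) • x := by
  rw [softThreshold, max_eq_left (sub_nonneg.2 h.le)]

lemma sub_softThreshold_of_lt_norm (hτ : 0 ≤ τ) (h : τ < ‖x‖) :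
    x - softThreshold τ x = (τ / ‖x‖) • x := by
  have hx : ‖x‖ ≠ 0 := (hτ.trans_lt h).ne'
  rw [softThreshold_of_lt_norm h, show τ / ‖x‖ = 1 - (‖x‖ - τ) / ‖x‖ by field_simp; ring,
    sub_smul, one_smul]

lemma norm_sub_softThreshold_le (hτ : 0 ≤ τ) (x : E) : ‖x - softThreshold τ x‖ ≤ τ := by
  rcases le_or_gt ‖x‖ τ with h | h
  · simpa [softThreshold_of_norm_le h] using h
  · have hx : 0 < ‖x‖ := hτ.trans_lt h
    rw [sub_softThreshold_of_lt_norm hτ h, norm_smul, Real.norm_of_nonneg (by positivity),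
      div_mul_cancel₀ _ hx.ne']

lemma inner_sub_softThreshold (hτ : 0 ≤ τ) (x : E) :
    ⟪x - softThreshold τ x, softThreshold τ x⟫_ℝ = τ * ‖softThreshold τ x‖ := by
  rcases le_or_gt ‖x‖ τ with h | h
  · simp [softThreshold_of_norm_le h]
  · have hx : 0 < ‖x‖ := hτ.trans_lt h
    rw [sub_softThreshold_of_lt_norm hτ h, softThreshold_of_lt_norm h, real_inner_smul_left,
      real_inner_smul_right, real_inner_self_eq_norm_sq, norm_smul,
      Real.norm_of_nonneg (div_nonneg (sub_nonneg.2 h.le) hx.le)]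
    field_simp

lemma eq_softThreshold_of_norm_sub_le_of_le_inner (hxy : ‖x - y‖ ≤ τ)
    (hinner : τ * ‖y‖ ≤ ⟪x - y, y⟫_ℝ) : y = softThreshold τ x := by
  have hcs : ⟪x - y, y⟫_ℝ ≤ ‖x - y‖ * ‖y‖ := real_inner_le_norm _ _
  rcases eq_or_ne y 0 with rfl | hy
  · rw [sub_zero] at hxy
    exact (softThreshold_of_norm_le hxy).symm
  have hy : 0 < ‖y‖ := norm_pos_iff.2 hy
  have hnorm : ‖x - y‖ = τ := le_antisymm hxy (le_of_mul_le_mul_right (hinner.trans hcs) hy)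
  have hpar : ‖y‖ • (x - y) = τ • y := by
    rw [← hnorm]
    exact inner_eq_norm_mul_iff_real.1 (le_antisymm hcs (hnorm ▸ hinner))
  have hx : ‖y‖ • x = (‖y‖ + τ) • y := by
    rw [add_smul, ← hpar, smul_sub]
    abel
  have hτ : 0 ≤ τ := hnorm ▸ norm_nonneg _
  have hnx : ‖x‖ = ‖y‖ + τ := by
    have := congrArg norm hx
    rw [norm_smul, norm_smul, Real.norm_of_nonneg hy.le,
      Real.norm_of_nonneg (by positivity), mul_comm] at this
    exact mul_right_cancel₀ hy.ne' this
  rw [softThreshold_of_lt_norm (by linarith), hnx, add_sub_cancel_right, div_eq_inv_mul,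
    mul_smul, hx, smul_smul, inv_mul_cancel₀ (by positivity), one_smul]

theorem eq_softThreshold_iff (hτ : 0 ≤ τ) :
    y = softThreshold τ x ↔ ‖x - y‖ ≤ τ ∧ τ * ‖y‖ ≤ ⟪x - y, y⟫_ℝ := by
  refine ⟨?_, fun h => eq_softThreshold_of_norm_sub_le_of_le_inner h.1 h.2⟩
  rintro rfl
  exact ⟨norm_sub_softThreshold_le hτ x, (inner_sub_softThreshold hτ x).ge⟩

theorem smul_eq_softThreshold_iff {c : ℝ} (hc : 0 < c) (hτ : 0 ≤ τ) {d : E} :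
    c • d = softThreshold τ x ↔ ‖x - c • d‖ ≤ τ ∧ τ * ‖d‖ ≤ ⟪x - c • d, d⟫_ℝ := by
  rw [eq_softThreshold_iff hτ, norm_smul, real_inner_smul_right, Real.norm_of_nonneg hc.le,
    mul_left_comm, mul_le_mul_iff_right₀ hc]

end SoftThreshold

noncomputable def Matrix.toEuclideanSpace {m n : Type*} :
    Matrix m n ℝ ≃ₗ[ℝ] EuclideanSpace ℝ (m × n) :=
  (Matrix.ofLinearEquiv ℝ).symm ≪≫ₗ (LinearEquiv.curry ℝ ℝ m n).symm ≪≫ₗ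
    (WithLp.linearEquiv 2 ℝ (m × n → ℝ)).symm

lemma fdot_eq_inner (A B : Matrix (Fin 3) (Fin 3) ℝ) :
    fdot A B = ⟪Matrix.toEuclideanSpace A, Matrix.toEuclideanSpace B⟫_ℝ := by
  simp [fdot, Matrix.toEuclideanSpace, PiLp.inner_apply, Fintype.sum_prod_type, mul_comm]

lemma fnorm_eq_norm (A : Matrix (Fin 3) (Fin 3) ℝ) :
    fnorm A = ‖Matrix.toEuclideanSpace A‖ := by
  rw [norm_eq_sqrt_real_inner, fnorm, fdot_eq_inner]

theorem stmt_1_general (ν τ : ℝ) (hν : 0 < ν) (hτ : 0 ≤ τ)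
    (S D : Matrix (Fin 3) (Fin 3) ℝ) :
    ((2 * ν) • D = if S = 0 then 0 else (max (fnorm S - τ) 0 / fnorm S) • S) ↔
      (fnorm (S - (2 * ν) • D) ≤ τ ∧
        fdot (S - (2 * ν) • D) D ≥ τ * fnorm D) := by
  rw [ite_eq_right_iff.2 fun h => by simp [h], ← Matrix.toEuclideanSpace.injective.eq_iff]
  simp only [map_smul, map_sub, fnorm_eq_norm, fdot_eq_inner, ge_iff_le]
  exact smul_eq_softThreshold_iff (by positivity) hτ

theorem stmt_1 (ν τ : ℝ) (hν : 0 < ν) (hτ : 0 ≤ τ)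
    (S D : Matrix (Fin 3) (Fin 3) ℝ) (hS : S.IsSymm) (hD : D.IsSymm) :
    ((2 * ν) • D = if S = 0 then 0 else (max (fnorm S - τ) 0 / fnorm S) • S) ↔
      (fnorm (S - (2 * ν) • D) ≤ τ ∧
        fdot (S - (2 * ν) • D) D ≥ τ * fnorm D) :=
  stmt_1_general ν τ hν hτ S D
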